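/- The invariant trace form τ(u, v) = Tr(L_{u·v̄}) on the Clifford algebra C = Cℓ(H, Q) is nondegenerate: for every u ∈ C with u ≠ 0 there exists v ∈ C with τ(u, v) ≠ 0. -/

import Mathlib

/-!
Take a `Q`-orthogonal basis `e₁, …, eₙ` of `H`; nondegeneracy makes every `Q eᵢ` nonzero. The
ordered monomials `e_S` span `C`, `e_S e_T` is a scalar multiple of `e_{S ∆ T}`, and `e_T e_T` is a
nonzero scalar. For `S ≠ ∅` left multiplication by `e_S` is traceless, since `e_S` is either odd or
anticommutes with one of its factors. So the form `(u, w) ↦ Tr (L_{u w})` is diagonal with nonzero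
diagonal entries on the spanning family `e_S`, hence nondegenerate; and `v ↦ v̄` is bijective.
-/

open CliffordAlgebra

/-- The invariant trace form `τ(u, v) = Tr (L_{u * v̄})` on the Clifford algebra,
where `v̄ = involute (reverse v)` and `L_w` is left multiplication by `w`. -/
noncomputable def invariantTraceForm
    {k : Type*} [Field k]
    {H : Type*} [AddCommGroup H] [Module k H]
    (Q : QuadraticForm k H) (u v : CliffordAlgebra Q) : k :=
  LinearMap.trace k (CliffordAlgebra Q)
    (LinearMap.mulLeft k (u * involute (reverse v)))

open scoped symmDiff

section MulLeftTrace

variable (R A : Type*) [CommRing R] [Ring A] [Algebra R A]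

/-- Unlike `Algebra.trace`, this does not require `A` to be commutative. -/
noncomputable def mulLeftTrace : A →ₗ[R] R :=
  LinearMap.trace R A ∘ₗ (Algebra.lmul R A).toLinearMap

variable {R A}

theorem mulLeftTrace_apply (a : A) :
    mulLeftTrace R A a = LinearMap.trace R A (LinearMap.mulLeft R a) :=
  rfl

theorem mulLeftTrace_mul_comm (a b : A) :
    mulLeftTrace R A (a * b) = mulLeftTrace R A (b * a) := by
  rw [mulLeftTrace_apply, mulLeftTrace_apply, LinearMap.mulLeft_mul, LinearMap.mulLeft_mul]
  exact LinearMap.trace_mul_comm R _ _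

theorem mulLeftTrace_algEquiv_apply (σ : A ≃ₐ[R] A) (a : A) :
    mulLeftTrace R A (σ a) = mulLeftTrace R A a := by
  have hconj : LinearMap.mulLeft R (σ a) = σ.toLinearEquiv.conj (LinearMap.mulLeft R a) := by
    ext x
    simp [LinearEquiv.conj_apply]
  rw [mulLeftTrace_apply, hconj, LinearMap.trace_conj', mulLeftTrace_apply]

theorem mulLeftTrace_algebraMap [Module.Free R A] [Module.Finite R A] (r : R) :
    mulLeftTrace R A (algebraMap R A r) = r * Module.finrank R A := by
  rw [Algebra.algebraMap_eq_smul_one, map_smul, mulLeftTrace_apply, LinearMap.mulLeft_one,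
    ← Module.End.one_eq_id, LinearMap.trace_one, smul_eq_mul]

end MulLeftTrace

theorem LinearMap.BilinForm.iIsOrtho.exists_apply_ne_zero {R V J : Type*} [CommSemiring R]
    [NoZeroDivisors R] [AddCommMonoid V] [Module R V] [Fintype J] {B : LinearMap.BilinForm R V}
    {f : J → V} (hB : B.iIsOrtho f) (hdiag : ∀ i, B (f i) (f i) ≠ 0)
    (hspan : Submodule.span R (Set.range f) = ⊤) {u : V} (hu : u ≠ 0) :
    ∃ i, B u (f i) ≠ 0 := by
  obtain ⟨c, rfl⟩ := (Submodule.mem_span_range_iff_exists_fun R).mp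
    (hspan ▸ Submodule.mem_top : u ∈ Submodule.span R (Set.range f))
  obtain ⟨i, hi⟩ : ∃ i, c i ≠ 0 := by
    by_contra! h
    simp [h] at hu
  refine ⟨i, ?_⟩
  rw [map_sum, LinearMap.sum_apply, Finset.sum_eq_single i (fun j _ hji => ?_) (by simp)]
  · simpa using mul_ne_zero hi (hdiag i)
  · simp [hB hji]

theorem QuadraticMap.exists_orthogonal_basis_of_nondegenerate {K V : Type*} [Field K]
    [Invertible (2 : K)] [AddCommGroup V] [Module K V] [FiniteDimensional K V]
    {Q : QuadraticForm K V} (hQ : (QuadraticMap.polarBilin Q).Nondegenerate) :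
    ∃ b : Module.Basis (Fin (Module.finrank K V)) K V,
      (Pairwise fun i j => Q.IsOrtho (b i) (b j)) ∧ ∀ i, Q (b i) ≠ 0 := by
  obtain ⟨b, hb⟩ := LinearMap.BilinForm.exists_orthogonal_basis
    (B := QuadraticMap.polarBilin Q) ⟨fun x y => QuadraticMap.polar_comm Q x y⟩
  refine ⟨b, fun i j hij => QuadraticMap.isOrtho_polarBilin.mp (hb hij), fun i hi => ?_⟩
  apply LinearMap.BilinForm.iIsOrtho.not_isOrtho_basis_self_of_nondegenerate hb hQ i
  simp [QuadraticMap.polarBilin_apply_apply, QuadraticMap.polar_self, hi]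

theorem Finset.singleton_symmDiff_eq_insert {α : Type*} [DecidableEq α] {a : α} {s : Finset α}
    (h : a ∉ s) : {a} ∆ s = insert a s := by
  rw [(Finset.disjoint_singleton_left.mpr h).symmDiff_eq_sup, Finset.insert_eq]
  rfl

namespace CliffordAlgebra

variable {R M : Type*} [CommRing R] [AddCommGroup M] [Module R M] {Q : QuadraticForm R M}

theorem prod_map_ι_mul_ι_of_forall_isOrtho {x : M} {xs : List M}
    (h : ∀ y ∈ xs, Q.IsOrtho x y) :
    (xs.map (ι Q)).prod * ι Q x = (-1 : R) ^ xs.length • (ι Q x * (xs.map (ι Q)).prod) := by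
  induction xs with
  | nil => simp
  | cons y ys ih =>
    rw [List.map_cons, List.prod_cons, mul_assoc, ih fun z hz => h z (List.mem_cons_of_mem y hz),
      mul_smul_comm, ← mul_assoc, ι_mul_ι_comm_of_isOrtho (h y List.mem_cons_self).symm,
      List.length_cons, pow_succ, mul_neg_one, neg_smul, neg_mul, smul_neg, mul_assoc]

theorem prod_map_ι_mul_self {xs : List M} (h : xs.Pairwise Q.IsOrtho) :
    (xs.map (ι Q)).prod * (xs.map (ι Q)).prod =
      algebraMap R _ ((-1) ^ xs.length.choose 2 * (xs.map Q).prod) := by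
  induction xs with
  | nil => simp
  | cons x xs ih =>
    obtain ⟨hx, hxs⟩ := List.pairwise_cons.mp h
    rw [List.map_cons, List.prod_cons, mul_assoc, ← mul_assoc _ (ι Q x),
      prod_map_ι_mul_ι_of_forall_isOrtho hx, smul_mul_assoc, mul_smul_comm, ← mul_assoc,
      ← mul_assoc, ι_sq_scalar, mul_assoc, ih hxs, ← map_mul, Algebra.smul_def, ← map_mul]
    congr 1
    simp [Nat.choose_succ_succ', pow_add]
    ring

theorem mulLeftTrace_ι_mul_prod_map_ι [IsAddTorsionFree R] {x : M} {xs : List M}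
    (h : ∀ y ∈ xs, Q.IsOrtho x y) :
    mulLeftTrace R (CliffordAlgebra Q) (ι Q x * (xs.map (ι Q)).prod) = 0 := by
  rw [← self_eq_neg, ← map_neg]
  -- For even `xs.length` the grading involution negates `ι x * ∏ xs`; for odd length `ι x`
  -- anticommutes with `∏ xs`.
  rcases Nat.even_or_odd xs.length with heven | hodd
  · have hinv : involute (ι Q x * (xs.map (ι Q)).prod) = -(ι Q x * (xs.map (ι Q)).prod) := by
      simpa [pow_succ, heven.neg_one_pow] using involute_prod_map_ι (Q := Q) (x :: xs)
    rw [← hinv]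
    exact (mulLeftTrace_algEquiv_apply involuteEquiv _).symm
  · rw [mulLeftTrace_mul_comm, prod_map_ι_mul_ι_of_forall_isOrtho h, hodd.neg_one_pow,
      neg_one_smul]

section Monomial

variable {I : Type*} [LinearOrder I]

variable (Q) in
noncomputable def monomial (v : I → M) (S : Finset I) : CliffordAlgebra Q :=
  (((S.sort (· ≤ ·)).map v).map (ι Q)).prod

variable {v : I → M}

theorem monomial_empty : monomial Q v ∅ = 1 := by
  simp [monomial]

theorem monomial_singleton (i : I) : monomial Q v {i} = ι Q (v i) := by
  simp [monomial]

theorem monomial_insert_of_forall_lt {i : I} {S : Finset I} (h : ∀ j ∈ S, i < j) :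
    monomial Q v (insert i S) = ι Q (v i) * monomial Q v S := by
  rw [monomial, Finset.sort_insert _ (fun j hj => (h j hj).le) fun hi => lt_irrefl i (h i hi)]
  rfl

theorem ι_mul_monomial (hv : Pairwise fun i j => Q.IsOrtho (v i) (v j)) (i : I) (S : Finset I) :
    ∃ c : R, ι Q (v i) * monomial Q v S = c • monomial Q v ({i} ∆ S) := by
  induction S using Finset.induction_on_min with
  | empty =>
    exact ⟨1, by rw [monomial_empty, mul_one, one_smul, ← Finset.bot_eq_empty, symmDiff_bot,
      monomial_singleton]⟩
  | insert a S haS ih =>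
    have haS' : a ∉ S := fun h => (haS a h).false
    rw [monomial_insert_of_forall_lt haS]
    rcases lt_trichotomy i a with hia | rfl | hai
    · have hiS : ∀ j ∈ insert a S, i < j := by
        simp only [Finset.mem_insert, forall_eq_or_imp]
        exact ⟨hia, fun j hj => hia.trans (haS j hj)⟩
      refine ⟨1, ?_⟩
      rw [one_smul, ← monomial_insert_of_forall_lt haS, ← monomial_insert_of_forall_lt hiS,
        Finset.singleton_symmDiff_eq_insert fun h => (hiS i h).false]
    · refine ⟨Q (v i), ?_⟩
      rw [← mul_assoc, ι_sq_scalar, ← Algebra.smul_def,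
        ← Finset.singleton_symmDiff_eq_insert haS', symmDiff_symmDiff_cancel_left]
    · obtain ⟨c, hc⟩ := ih
      have haiS : ∀ j ∈ {i} ∆ S, a < j := by
        intro j hj
        rcases Finset.mem_symmDiff.mp hj with ⟨hj, -⟩ | ⟨hj, -⟩
        · exact Finset.mem_singleton.mp hj ▸ hai
        · exact haS j hj
      refine ⟨-c, ?_⟩
      rw [← mul_assoc, ι_mul_ι_comm_of_isOrtho (hv hai.ne'), neg_mul, mul_assoc, hc,
        mul_smul_comm, ← monomial_insert_of_forall_lt haiS, neg_smul,
        ← Finset.singleton_symmDiff_eq_insert fun h => (haiS a h).false,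
        ← Finset.singleton_symmDiff_eq_insert haS', symmDiff_left_comm]

theorem monomial_mul_monomial (hv : Pairwise fun i j => Q.IsOrtho (v i) (v j))
    (S T : Finset I) :
    ∃ c : R, monomial Q v S * monomial Q v T = c • monomial Q v (S ∆ T) := by
  induction S using Finset.induction_on_min with
  | empty =>
    exact ⟨1, by rw [monomial_empty, one_mul, one_smul, ← Finset.bot_eq_empty, bot_symmDiff]⟩
  | insert a S haS ih =>
    obtain ⟨c, hc⟩ := ih
    obtain ⟨d, hd⟩ := ι_mul_monomial hv a (S ∆ T)
    refine ⟨c * d, ?_⟩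
    rw [monomial_insert_of_forall_lt haS, mul_assoc, hc, mul_smul_comm, hd, smul_smul,
      ← Finset.singleton_symmDiff_eq_insert fun h => (haS a h).false, symmDiff_assoc]

theorem monomial_mul_self (hv : Pairwise fun i j => Q.IsOrtho (v i) (v j)) (S : Finset I) :
    monomial Q v S * monomial Q v S =
      algebraMap R _ ((-1) ^ S.card.choose 2 * ∏ i ∈ S, Q (v i)) := by
  have hpair : ((S.sort (· ≤ ·)).map v).Pairwise Q.IsOrtho :=
    List.Pairwise.map v (fun _ _ hij => hv hij) (S.sort_nodup _)
  rw [monomial, prod_map_ι_mul_self hpair, List.length_map, Finset.length_sort, List.map_map,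
    ((S.sort_perm_toList _).map _).prod_eq, Finset.prod_map_toList]
  rfl

theorem mulLeftTrace_monomial [IsAddTorsionFree R]
    (hv : Pairwise fun i j => Q.IsOrtho (v i) (v j)) {S : Finset I} (hS : S.Nonempty) :
    mulLeftTrace R _ (monomial Q v S) = 0 := by
  rw [← Finset.insert_erase (S.min'_mem hS),
    monomial_insert_of_forall_lt fun j hj => S.min'_lt_of_mem_erase_min' hS hj, monomial]
  refine mulLeftTrace_ι_mul_prod_map_ι fun y hy => ?_
  obtain ⟨j, hj, rfl⟩ := List.mem_map.mp hy
  exact hv (S.min'_lt_of_mem_erase_min' hS ((Finset.mem_sort _).mp hj)).ne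

theorem span_range_monomial (hv : Pairwise fun i j => Q.IsOrtho (v i) (v j))
    (hspan : Submodule.span R (Set.range v) = ⊤) :
    Submodule.span R (Set.range (monomial Q v)) = ⊤ := by
  set W := Submodule.span R (Set.range (monomial Q v))
  have hmul : W * W ≤ W := by
    rw [Submodule.span_mul_span, Submodule.span_le]
    rintro _ ⟨_, ⟨S, rfl⟩, _, ⟨T, rfl⟩, rfl⟩
    obtain ⟨c, hc⟩ := monomial_mul_monomial hv S T
    change _ * _ ∈ W
    rw [hc]
    exact W.smul_mem c (Submodule.subset_span ⟨_, rfl⟩)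
  have hι : Submodule.map (ι Q) ⊤ ≤ W := by
    rw [← hspan, Submodule.map_span, Submodule.span_le]
    rintro _ ⟨_, ⟨i, rfl⟩, rfl⟩
    exact Submodule.subset_span ⟨{i}, monomial_singleton i⟩
  rw [eq_top_iff]
  rintro x -
  induction x using CliffordAlgebra.induction with
  | algebraMap r =>
    rw [Algebra.algebraMap_eq_smul_one]
    exact W.smul_mem r (Submodule.subset_span ⟨∅, monomial_empty⟩)
  | ι x => exact hι (Submodule.mem_map_of_mem Submodule.mem_top)
  | mul x y hx hy => exact hmul (Submodule.mul_mem_mul hx hy)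
  | add x y hx hy => exact W.add_mem hx hy

end Monomial

end CliffordAlgebra

theorem invariantTraceForm_nondegenerate
    {k : Type*} [Field k] [CharZero k]
    {H : Type*} [AddCommGroup H] [Module k H] [FiniteDimensional k H]
    (Q : QuadraticForm k H)
    (hQ : LinearMap.BilinForm.Nondegenerate (QuadraticMap.polarBilin Q))
    (u : CliffordAlgebra Q) (hu : u ≠ 0) :
    ∃ v : CliffordAlgebra Q, invariantTraceForm Q u v ≠ 0 := by
  have : Invertible (2 : k) := invertibleOfNonzero two_ne_zero
  obtain ⟨b, hortho, hanis⟩ := QuadraticMap.exists_orthogonal_basis_of_nondegenerate hQ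
  have hspan := span_range_monomial hortho b.span_eq
  have : Module.Finite k (CliffordAlgebra Q) := ⟨hspan ▸ Submodule.fg_span (Set.finite_range _)⟩
  let B : LinearMap.BilinForm k (CliffordAlgebra Q) :=
    (LinearMap.mul k _).compr₂ (mulLeftTrace k (CliffordAlgebra Q))
  have hoff : B.iIsOrtho (monomial Q b) := fun S T hST => by
    obtain ⟨c, hc⟩ := monomial_mul_monomial hortho S T
    change mulLeftTrace k _ (monomial Q b S * monomial Q b T) = 0
    rw [hc, map_smul, mulLeftTrace_monomial hortho (Finset.symmDiff_nonempty.mpr hST), smul_zero]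
  have hdiag : ∀ T, B (monomial Q b T) (monomial Q b T) ≠ 0 := fun T => by
    change mulLeftTrace k _ (monomial Q b T * monomial Q b T) ≠ 0
    rw [monomial_mul_self hortho, mulLeftTrace_algebraMap]
    exact mul_ne_zero (mul_ne_zero (pow_ne_zero _ (neg_ne_zero.mpr one_ne_zero))
      (Finset.prod_ne_zero_iff.mpr fun i _ => hanis i))
      (Nat.cast_ne_zero.mpr Module.finrank_pos.ne')
  obtain ⟨T, hT⟩ := hoff.exists_apply_ne_zero hdiag hspan hu
  refine ⟨reverse (involute (monomial Q b T)), ?_⟩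
  rwa [invariantTraceForm, reverse_reverse, involute_involute]
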